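/- Let {u_θ}_{θ∈Θ} be a linearly independent family spanning H with Gram matrix G_U, and let {M_θ}_{θ∈Θ} be positive semidefinite operators on K. There exists a completely positive subunital map Λ : L(H) → L(K) with Λ(|u_θ⟩⟨u_θ|) = M_θ for all θ if and only if there exist operators M_{θ,θ'} ∈ L(K) with M_{θ,θ} = M_θ, the block matrix [M_{θ,θ'}]_{θ,θ'} positive semidefinite, and Σ_{θ,θ'} (G_U^{-1})_{θ,θ'} M_{θ,θ'} ≤ I_K. -/

import Mathlib

open Matrix Finset
open scoped ComplexOrder

noncomputable section

/-- The rank-one operator `|u⟩⟨u|` as a matrix: `(outer u) i j = u i * conj (u j)`. -/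
def outer {n : ℕ} (u : Fin n → ℂ) : Matrix (Fin n) (Fin n) ℂ :=
  Matrix.vecMulVec u (star u)

/-- A linear map on matrices is completely positive iff it admits a Kraus representation. -/
def IsCPMap {n m : ℕ}
    (Λ : Matrix (Fin n) (Fin n) ℂ →ₗ[ℂ] Matrix (Fin m) (Fin m) ℂ) : Prop :=
  ∃ (k : ℕ) (W : Fin k → Matrix (Fin m) (Fin n) ℂ),
    ∀ X, Λ X = ∑ i, W i * X * (W i)ᴴ

/-- `Λ` is unital: `Λ(I) = I`. -/
def IsUnital {n m : ℕ}
    (Λ : Matrix (Fin n) (Fin n) ℂ →ₗ[ℂ] Matrix (Fin m) (Fin m) ℂ) : Prop :=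
  Λ 1 = 1

/-- `Λ` is subunital: `Λ(I) ≤ I` in the Loewner order. -/
def IsSubunital {n m : ℕ}
    (Λ : Matrix (Fin n) (Fin n) ℂ →ₗ[ℂ] Matrix (Fin m) (Fin m) ℂ) : Prop :=
  ((1 : Matrix (Fin m) (Fin m) ℂ) - Λ 1).PosSemidef

/-- Gram matrix of a family of vectors. -/
def gram {Θ : Type*} {n : ℕ} (u : Θ → (Fin n → ℂ)) : Matrix Θ Θ ℂ :=
  Matrix.of fun θ θ' => star (u θ) ⬝ᵥ u θ'

/-- Largest real eigenvalue of a matrix (intended for Hermitian matrices). -/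
def lamMax {n : ℕ} (A : Matrix (Fin n) (Fin n) ℂ) : ℝ :=
  sSup {r : ℝ | ∃ x : Fin n → ℂ, x ≠ 0 ∧ A.mulVec x = (r : ℂ) • x}

/-- Smallest real eigenvalue of a matrix (intended for Hermitian matrices). -/
def lamMin {n : ℕ} (A : Matrix (Fin n) (Fin n) ℂ) : ℝ :=
  sInf {r : ℝ | ∃ x : Fin n → ℂ, x ≠ 0 ∧ A.mulVec x = (r : ℂ) • x}

/-- Operator (spectral) norm of a matrix. -/
def opNorm {n : ℕ} (A : Matrix (Fin n) (Fin n) ℂ) : ℝ :=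
  ‖Matrix.toEuclideanCLM (𝕜 := ℂ) A‖

/-!
Let `U` be the matrix with columns `u θ`, so that `G = Uᴴ U`. Since the `u θ` form a basis, the
left inverse `G⁻¹ Uᴴ` of `U` is two-sided, i.e. `I = ∑ θ θ', (G⁻¹) θ θ' • |u θ⟩⟨u θ'|`. Hence
`Λ I = ∑ θ θ', (G⁻¹) θ θ' • Λ |u θ⟩⟨u θ'|` for every linear `Λ`, and the blocks are
`M θ θ' = Λ |u θ⟩⟨u θ'|`. For a Kraus map this block matrix is a sum of rank-one positive matrices;
conversely, Kraus operators realising a positive block matrix are read off from a factorisation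
`Cᴴ C` of it.
-/

lemma Matrix.mul_vecMulVec_star_mul_conjTranspose {R ι κ : Type*} [Semiring R] [StarRing R]
    [Fintype κ] (W : Matrix ι κ R) (a b : κ → R) :
    W * vecMulVec a (star b) * Wᴴ = vecMulVec (W *ᵥ a) (star (W *ᵥ b)) := by
  rw [mul_vecMulVec, vecMulVec_mul, star_mulVec]

def blocks {Θ : Type*} {m : ℕ} (B : Θ → Θ → Matrix (Fin m) (Fin m) ℂ) :
    Matrix (Fin m × Θ) (Fin m × Θ) ℂ :=
  Matrix.of fun p q => B p.2 q.2 p.1 q.1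

section Kraus

variable {n m : ℕ} {ι : Type*} [Fintype ι]

def krausMap (W : ι → Matrix (Fin m) (Fin n) ℂ) :
    Matrix (Fin n) (Fin n) ℂ →ₗ[ℂ] Matrix (Fin m) (Fin m) ℂ where
  toFun X := ∑ i, W i * X * (W i)ᴴ
  map_add' X Y := by simp only [Matrix.mul_add, Matrix.add_mul, Finset.sum_add_distrib]
  map_smul' c X := by simp only [Matrix.mul_smul, Matrix.smul_mul, Finset.smul_sum,
    RingHom.id_apply]

lemma krausMap_apply (W : ι → Matrix (Fin m) (Fin n) ℂ) (X : Matrix (Fin n) (Fin n) ℂ) :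
    krausMap W X = ∑ i, W i * X * (W i)ᴴ :=
  rfl

lemma isCPMap_krausMap (W : ι → Matrix (Fin m) (Fin n) ℂ) : IsCPMap (krausMap W) := by
  let e := Fintype.equivFin ι
  refine ⟨Fintype.card ι, W ∘ e.symm, fun X => ?_⟩
  rw [krausMap_apply, ← e.symm.sum_comp]
  rfl

lemma IsCPMap.posSemidef_blocks {Θ : Type*} [Fintype Θ]
    {Λ : Matrix (Fin n) (Fin n) ℂ →ₗ[ℂ] Matrix (Fin m) (Fin m) ℂ} (hΛ : IsCPMap Λ)
    (v : Θ → Fin n → ℂ) :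
    (blocks fun θ θ' => Λ (vecMulVec (v θ) (star (v θ')))).PosSemidef := by
  obtain ⟨k, W, hW⟩ := hΛ
  have hsum : (blocks fun θ θ' => Λ (vecMulVec (v θ) (star (v θ'))))
      = ∑ i, vecMulVec (fun p : Fin m × Θ => (W i *ᵥ v p.2) p.1)
          (star fun p : Fin m × Θ => (W i *ᵥ v p.2) p.1) := by
    ext p q
    simp only [blocks, of_apply, hW, Matrix.sum_apply, mul_vecMulVec_star_mul_conjTranspose,
      vecMulVec_apply, Pi.star_apply]
  rw [hsum]
  exact posSemidef_sum _ fun i _ => posSemidef_vecMulVec_self_star _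

end Kraus

section Gram

variable {Θ : Type*} [Fintype Θ] [DecidableEq Θ] {n : ℕ} (u : Θ → Fin n → ℂ)

def colMatrix : Matrix (Fin n) Θ ℂ := (Matrix.of u)ᵀ

omit [Fintype Θ] [DecidableEq Θ] in
lemma gram_eq_conjTranspose_mul_colMatrix : gram u = (colMatrix u)ᴴ * colMatrix u := by
  ext θ θ'
  simp [_root_.gram, colMatrix, Matrix.mul_apply, dotProduct]

lemma colMatrix_mulVec_single (θ : Θ) : colMatrix u *ᵥ Pi.single θ 1 = u θ := by
  ext i
  simp [colMatrix]

variable {u}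

lemma isUnit_gram (hu : LinearIndependent ℂ u) : IsUnit (gram u) := by
  rw [gram_eq_conjTranspose_mul_colMatrix]
  exact (PosDef.conjTranspose_mul_self _ (mulVec_injective_iff.2 hu)).isUnit

lemma gram_inv_mul_conjTranspose_mul_colMatrix (hu : LinearIndependent ℂ u) :
    (gram u)⁻¹ * (colMatrix u)ᴴ * colMatrix u = 1 := by
  rw [Matrix.mul_assoc, ← gram_eq_conjTranspose_mul_colMatrix,
    nonsing_inv_mul _ ((isUnit_iff_isUnit_det _).1 (isUnit_gram hu))]

/-- `G⁻¹ Uᴴ` is a left inverse of `U`, and `U` has a right inverse because its columns span. -/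
lemma colMatrix_mul_gram_inv_mul_conjTranspose (hu : LinearIndependent ℂ u)
    (hus : Submodule.span ℂ (Set.range u) = ⊤) :
    colMatrix u * ((gram u)⁻¹ * (colMatrix u)ᴴ) = 1 := by
  have hsurj : Function.Surjective (colMatrix u).mulVec := by
    rw [← coe_mulVecLin, ← LinearMap.range_eq_top, range_mulVecLin]
    exact hus
  obtain ⟨B, hB⟩ := mulVec_surjective_iff_exists_right_inverse.1 hsurj
  calc colMatrix u * ((gram u)⁻¹ * (colMatrix u)ᴴ)
      = colMatrix u * ((gram u)⁻¹ * (colMatrix u)ᴴ * (colMatrix u * B)) := by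
        rw [hB, Matrix.mul_one]
    _ = colMatrix u * B := by
        rw [← Matrix.mul_assoc _ (colMatrix u) B, gram_inv_mul_conjTranspose_mul_colMatrix hu,
          Matrix.one_mul]
    _ = 1 := hB

lemma sum_gram_inv_smul_vecMulVec (hu : LinearIndependent ℂ u)
    (hus : Submodule.span ℂ (Set.range u) = ⊤) :
    ∑ θ, ∑ θ', (gram u)⁻¹ θ θ' • vecMulVec (u θ) (star (u θ')) = 1 := by
  rw [← colMatrix_mul_gram_inv_mul_conjTranspose hu hus]
  ext i j
  simp only [Matrix.sum_apply, Matrix.smul_apply, vecMulVec_apply, Pi.star_apply,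
    Matrix.mul_apply, conjTranspose_apply, smul_eq_mul, colMatrix, transpose_apply, of_apply,
    Finset.mul_sum]
  refine Finset.sum_congr rfl fun θ _ => Finset.sum_congr rfl fun θ' _ => ?_
  ring

lemma map_one_eq_sum_gram_inv_smul {m : ℕ} (hu : LinearIndependent ℂ u)
    (hus : Submodule.span ℂ (Set.range u) = ⊤)
    (Λ : Matrix (Fin n) (Fin n) ℂ →ₗ[ℂ] Matrix (Fin m) (Fin m) ℂ) :
    Λ 1 = ∑ θ, ∑ θ', (gram u)⁻¹ θ θ' • Λ (vecMulVec (u θ) (star (u θ'))) := by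
  simp only [← sum_gram_inv_smul_vecMulVec hu hus, map_sum, map_smul]

/-- With `blocks B = Cᴴ C`, the Kraus operators are the rows of `C`, reshaped into `m × Θ`
matrices and composed with the left inverse `G⁻¹ Uᴴ` of `U`, which sends `u θ` to `e_θ`. -/
lemma exists_kraus_of_posSemidef_blocks {m : ℕ} (hu : LinearIndependent ℂ u)
    {B : Θ → Θ → Matrix (Fin m) (Fin m) ℂ} (hB : (blocks B).PosSemidef) :
    ∃ W : Fin m × Θ → Matrix (Fin m) (Fin n) ℂ,
      ∀ θ θ', ∑ k, W k * vecMulVec (u θ) (star (u θ')) * (W k)ᴴ = B θ θ' := by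
  obtain ⟨C, hC⟩ : ∃ C : Matrix (Fin m × Θ) (Fin m × Θ) ℂ, blocks B = Cᴴ * C := by
    open scoped MatrixOrder in exact CStarAlgebra.nonneg_iff_eq_star_mul_self.mp hB.nonneg
  let row (k : Fin m × Θ) : Matrix (Fin m) Θ ℂ := Matrix.of fun p θ => star (C k (p, θ))
  have hrow : ∀ k θ, (row k * ((gram u)⁻¹ * (colMatrix u)ᴴ)) *ᵥ u θ
      = fun p => star (C k (p, θ)) := by
    intro k θ
    rw [← colMatrix_mulVec_single u θ, mulVec_mulVec, Matrix.mul_assoc,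
      gram_inv_mul_conjTranspose_mul_colMatrix hu, Matrix.mul_one]
    ext p
    simp [row]
  refine ⟨fun k => row k * ((gram u)⁻¹ * (colMatrix u)ᴴ), fun θ θ' => ?_⟩
  ext p q
  have hpq := congrFun (congrFun hC (p, θ)) (q, θ')
  simp only [blocks, of_apply, Matrix.mul_apply, conjTranspose_apply] at hpq
  simp only [Matrix.sum_apply, mul_vecMulVec_star_mul_conjTranspose, hrow, vecMulVec_apply,
    Pi.star_apply, star_star, hpq]

end Gram

theorem stmt8_general {Θ : Type*} [Fintype Θ] [DecidableEq Θ] {n m : ℕ}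
    (u : Θ → (Fin n → ℂ))
    (hu : LinearIndependent ℂ u)
    (hus : Submodule.span ℂ (Set.range u) = ⊤)
    (M : Θ → Matrix (Fin m) (Fin m) ℂ) :
    (∃ Λ : Matrix (Fin n) (Fin n) ℂ →ₗ[ℂ] Matrix (Fin m) (Fin m) ℂ,
        IsCPMap Λ ∧ IsSubunital Λ ∧ ∀ θ, Λ (outer (u θ)) = M θ) ↔
      ∃ Mb : Θ → Θ → Matrix (Fin m) (Fin m) ℂ,
        (∀ θ, Mb θ θ = M θ) ∧
        (Matrix.of fun (p q : Fin m × Θ) => Mb p.2 q.2 p.1 q.1).PosSemidef ∧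
        ((1 : Matrix (Fin m) (Fin m) ℂ) -
          ∑ θ, ∑ θ', ((gram u)⁻¹ θ θ') • Mb θ θ').PosSemidef := by
  constructor
  · rintro ⟨Λ, hCP, hsub, hΛ⟩
    refine ⟨fun θ θ' => Λ (vecMulVec (u θ) (star (u θ'))), hΛ, hCP.posSemidef_blocks u, ?_⟩
    rw [← map_one_eq_sum_gram_inv_smul hu hus Λ]
    exact hsub
  · rintro ⟨Mb, hdiag, hpsd, hsub⟩
    obtain ⟨W, hW⟩ := exists_kraus_of_posSemidef_blocks hu hpsd
    refine ⟨krausMap W, isCPMap_krausMap W, ?_, fun θ => (hW θ θ).trans (hdiag θ)⟩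
    rw [IsSubunital, map_one_eq_sum_gram_inv_smul hu hus]
    simpa only [krausMap_apply, hW] using hsub

theorem stmt8 {Θ : Type*} [Fintype Θ] [DecidableEq Θ] {n m : ℕ}
    (u : Θ → (Fin n → ℂ))
    (hu : LinearIndependent ℂ u)
    (hus : Submodule.span ℂ (Set.range u) = ⊤)
    (M : Θ → Matrix (Fin m) (Fin m) ℂ) (hM : ∀ θ, (M θ).PosSemidef) :
    (∃ Λ : Matrix (Fin n) (Fin n) ℂ →ₗ[ℂ] Matrix (Fin m) (Fin m) ℂ,
        IsCPMap Λ ∧ IsSubunital Λ ∧ ∀ θ, Λ (outer (u θ)) = M θ) ↔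
      ∃ Mb : Θ → Θ → Matrix (Fin m) (Fin m) ℂ,
        (∀ θ, Mb θ θ = M θ) ∧
        (Matrix.of fun (p q : Fin m × Θ) => Mb p.2 q.2 p.1 q.1).PosSemidef ∧
        ((1 : Matrix (Fin m) (Fin m) ℂ) -
          ∑ θ, ∑ θ', ((gram u)⁻¹ θ θ') • Mb θ θ').PosSemidef :=
  stmt8_general u hu hus M
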